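/- Let B₀ be a Lipschitz vector field on a bounded domain Ω ⊂ ℝ³, let Γ₀ and Γ be rectifiable curves (1-currents) in Ω with lengths |Γ₀|, |Γ| > 0 and circulations ⟨B₀,Γ₀⟩, ⟨B₀,Γ⟩, with R(Γ₀) = ⟨B₀,Γ₀⟩/|Γ₀| > 0 and α := R(Γ₀) − R(Γ) ≥ 0. Then | |Γ| − |Γ₀| | ≤ (1/R(Γ₀)) · ( α·|Γ| + ‖B₀‖_{C^{0,1}} · ‖Γ − Γ₀‖_* ), where ‖Γ − Γ₀‖_* denotes the dual norm sup over Lipschitz fields B with ‖B‖_{C^{0,1}} ≤ 1 of ⟨B, Γ − Γ₀⟩. -/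
import Mathlib


/-- Lemma 4.1 of the paper: control of the length difference of two curves by the
ratio deficit and the dual-norm distance. Here `LΓ₀, LΓ` are the lengths of `Γ₀, Γ`,
`c₀, c` their circulations of `B₀`, `K = ‖B₀‖_{C^{0,1}}` and `d = ‖Γ − Γ₀‖_*`, with
the dual-norm inequality `|c₀ − c| ≤ K·d` as hypothesis. -/
theorem length_control_by_ratio_deficit (LΓ₀ LΓ c₀ c K d : ℝ)
    (hL₀ : 0 < LΓ₀) (hL : 0 < LΓ)
    (hR₀ : 0 < c₀ / LΓ₀)
    (hα : 0 ≤ c₀ / LΓ₀ - c / LΓ)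
    (hK : 0 ≤ K) (hd : 0 ≤ d)
    (hdual : |c₀ - c| ≤ K * d) :
    |LΓ - LΓ₀| ≤ (1 / (c₀ / LΓ₀)) * ((c₀ / LΓ₀ - c / LΓ) * LΓ + K * d) := by
  set R₀ := c₀ / LΓ₀ with hR₀def
  have key : R₀ * (LΓ - LΓ₀) = (R₀ - c / LΓ) * LΓ + (c - c₀) := by
    rw [hR₀def]; field_simp; ring
  have h1 : |R₀ * (LΓ - LΓ₀)| ≤ (R₀ - c / LΓ) * LΓ + K * d := by
    rw [key]
    calc |(R₀ - c / LΓ) * LΓ + (c - c₀)| ≤ |(R₀ - c / LΓ) * LΓ| + |c - c₀| :=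
          abs_add_le _ _
      _ ≤ (R₀ - c / LΓ) * LΓ + K * d := by
          have := abs_sub_comm c c₀
          have h2 : |(R₀ - c / LΓ) * LΓ| = (R₀ - c / LΓ) * LΓ :=
            abs_of_nonneg (mul_nonneg hα hL.le)
          linarith [hdual]
  rw [abs_mul, abs_of_pos hR₀] at h1
  rw [one_div, inv_mul_eq_div, le_div_iff₀' hR₀]
  exact h1
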